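/- Let $p$ be an odd prime, $g$ a conjugate of $f_p$ in $C_2 \wr S_{2p}$ commuting with $\sigma_1\sigma_2$, and suppose $g(1) = x$. Then $x \notin \{2,3,\ldots,p,\bar 2,\ldots,\bar p\}$; that is, $g$ must map $1$ into the set $\{1,\bar 1\} \cup \{1^*,\ldots,p^*,\overline{1^*},\ldots,\overline{p^*}\}$ (with $x^* = x+p$). -/

import Mathlib

/-!
Ground set `(Fin 2 × Fin p) × Bool`: the point `1` is `((0,0),false)`, the unstarred block
is `{((0,i),ε)}`, and the conclusion says: if `g` maps `1` into the unstarred block `j = 0`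
then it lands at position `0` (i.e. on `1` or `1̄`).

A conjugate of `f_p` by an element commuting with the bar map is an involution commuting with
the bar map. If `g(1) = ((0,k),ε)`, commuting with the `k`-th power of the rotation gives
`g((0,k),false) = ((0,2k),ε)`, whereas `g((0,k),ε) = 1` by involutivity; up to the bar map
these are the same point, so `2k = 0` in `Fin p`, and `k = 0` as `p` is odd.
-/

def barPerm (α : Type*) : Equiv.Perm (α × Bool) :=
  Function.Involutive.toPerm (fun x => (x.1, !x.2)) (by intro x; simp)

def rotBlocks (p : ℕ) : Equiv.Perm ((Fin 2 × Fin p) × Bool) :=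
  Equiv.prodCongr (Equiv.prodCongr (Equiv.refl (Fin 2)) (finRotate p)) (Equiv.refl Bool)

def fp (p : ℕ) : Equiv.Perm ((Fin 2 × Fin p) × Bool) :=
  Equiv.prodCongr (Equiv.prodCongr (Equiv.swap (0 : Fin 2) 1) (Equiv.refl (Fin p)))
    (Equiv.refl Bool)

theorem fp_mul_self (p : ℕ) : fp p * fp p = 1 := by
  ext ⟨⟨a, b⟩, ε⟩ <;> simp [fp]

theorem commute_fp_barPerm (p : ℕ) : Commute (fp p) (barPerm (Fin 2 × Fin p)) := by
  ext ⟨⟨a, b⟩, ε⟩ <;> simp [fp, barPerm, Function.Involutive.toPerm]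

open Fin.NatCast in
theorem rotBlocks_pow_apply {p : ℕ} [NeZero p] (m : ℕ) (a : Fin 2) (b : Fin p) (ε : Bool) :
    (rotBlocks p ^ m) ((a, b), ε) = ((a, b + m), ε) := by
  induction m with
  | zero => simp
  | succ m ih =>
    rw [pow_succ', Equiv.Perm.mul_apply, ih]
    simp [rotBlocks, add_assoc]

theorem Fin.eq_zero_of_add_self_eq_zero {p : ℕ} [NeZero p] (hodd : Odd p) {k : Fin p}
    (hk : k + k = 0) : k = 0 := by
  have hdvd : p ∣ 2 * k.val := by
    rw [two_mul, Nat.dvd_iff_mod_eq_zero, ← Fin.val_add, hk, Fin.val_zero]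
  exact Fin.ext <|
    Nat.eq_zero_of_dvd_of_lt (hodd.coprime_two_left.symm.dvd_of_dvd_mul_left hdvd) k.isLt

theorem add_self_eq_zero_of_commute_barPerm_rotBlocks {p : ℕ} [NeZero p]
    {g : Equiv.Perm ((Fin 2 × Fin p) × Bool)} (hinv : g * g = 1)
    (hbar : Commute g (barPerm (Fin 2 × Fin p))) (hrot : Commute g (rotBlocks p))
    {a : Fin 2} {k : Fin p} {ε : Bool} (hg : g ((a, 0), false) = ((a, k), ε)) :
    k + k = 0 := by
  have hshift : g ((a, k), false) = ((a, k + k), ε) := by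
    have := DFunLike.congr_fun (hrot.pow_right k.val).eq ((a, 0), false)
    simpa [rotBlocks_pow_apply, hg] using this
  have hback : g ((a, k), ε) = ((a, 0), false) := by
    rw [← hg, ← Equiv.Perm.mul_apply, hinv, Equiv.Perm.one_apply]
  cases ε
  · simpa [hshift, eq_comm] using hback
  · have hflip := DFunLike.congr_fun hbar.eq ((a, k), false)
    simpa [hshift, hback, barPerm, Function.Involutive.toPerm, eq_comm] using hflip

/-- A conjugate of `f_p` commuting with `σ₁σ₂` cannot map `1` to any of
`2,…,p,2̄,…,p̄`. -/
theorem image_of_one (p : ℕ) (hp : p.Prime) (hodd : Odd p)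
    (g : Equiv.Perm ((Fin 2 × Fin p) × Bool))
    (hconj : ∃ h ∈ Subgroup.centralizer {barPerm (Fin 2 × Fin p)},
      g = h⁻¹ * fp p * h)
    (hcomm : Commute g (rotBlocks p)) :
    (g ((0, ⟨0, hp.pos⟩), false)).1.1 = 0 →
      (g ((0, ⟨0, hp.pos⟩), false)).1.2 = ⟨0, hp.pos⟩ := by
  intro h0
  have : NeZero p := ⟨hp.ne_zero⟩
  obtain ⟨h, hh, rfl⟩ := hconj
  have hbh : Commute (barPerm (Fin 2 × Fin p)) h := Subgroup.mem_centralizer_iff.mp hh _ rfl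
  have hinv : h⁻¹ * fp p * h * (h⁻¹ * fp p * h) = 1 := by
    rw [show h⁻¹ * fp p * h * (h⁻¹ * fp p * h) = h⁻¹ * (fp p * fp p) * h by group, fp_mul_self]
    group
  have hbar : Commute (h⁻¹ * fp p * h) (barPerm (Fin 2 × Fin p)) :=
    ((hbh.inv_right.mul_right (commute_fp_barPerm p).symm).mul_right hbh).symm
  have hzero : (⟨0, hp.pos⟩ : Fin p) = 0 := rfl
  rw [hzero] at h0 ⊢
  exact Fin.eq_zero_of_add_self_eq_zero hodd
    (add_self_eq_zero_of_commute_barPerm_rotBlocks hinv hbar hcomm (Prod.ext (Prod.ext h0 rfl) rfl))
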